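/- Let g be any subspace of the space of alternating 2-forms on ℝⁿ (identified with skew-symmetric endomorphisms via A(X,Y) = ⟨AX,Y⟩), and let m be its orthogonal complement with respect to the inner product ⟨A,B⟩ = ∑_{i<j} A(e_i,e_j)B(e_i,e_j). For a linear map Γ : ℝⁿ → m the following are equivalent: (1) there exists a linear map Σ : ℝⁿ → g such that Γ(Y)(X,Z) + Γ(Z)(X,Y) = Σ(Y)(X,Z) + Σ(Z)(X,Y) for all X,Y,Z ∈ ℝⁿ; (2) there exists an alternating 3-form T on ℝⁿ such that Γ(X) = proj_m(T(X,·,·)) for all X ∈ ℝⁿ. Moreover, if (2) holds with the 3-form T, then Σ(X) := −proj_g(T(X,·,·)) is a map satisfying the identity in (1). -/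

import Mathlib

open scoped BigOperators RealInnerProductSpace

noncomputable section

/-- `n`-dimensional Euclidean space. -/
abbrev E (n : ℕ) := EuclideanSpace ℝ (Fin n)

/-- Alternating 2-forms on `ℝⁿ`. -/
abbrev Form2 (n : ℕ) := (E n) [⋀^Fin 2]→ₗ[ℝ] ℝ

/-- Alternating 3-forms on `ℝⁿ`. -/
abbrev Form3 (n : ℕ) := (E n) [⋀^Fin 3]→ₗ[ℝ] ℝ

/-- The standard orthonormal basis vectors of `ℝⁿ`. -/
def stdBasis {n : ℕ} (i : Fin n) : E n := EuclideanSpace.single i 1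

/-- The inner product `⟨A,B⟩ = ∑_{i<j} A(e_i,e_j)·B(e_i,e_j)` on alternating 2-forms. -/
def ip {n : ℕ} (A B : Form2 n) : ℝ :=
  ∑ i : Fin n, ∑ j : Fin n, if i < j then
    A ![stdBasis i, stdBasis j] * B ![stdBasis i, stdBasis j] else 0

/-- The contraction `(s ⌟ T)(X) = ∑_{i<j} s(e_i,e_j)·T(e_i,e_j,X)` of a 3-form by a 2-form. -/
def hook {n : ℕ} (s : Form2 n) (T : Form3 n) (X : E n) : ℝ :=
  ∑ i : Fin n, ∑ j : Fin n, if i < j then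
    s ![stdBasis i, stdBasis j] * T ![stdBasis i, stdBasis j, X] else 0

/-- `IsOrthProj W p q` : `q` is the orthogonal projection (w.r.t. `ip`) of `p`
onto the subspace `W` of alternating 2-forms. -/
def IsOrthProj {n : ℕ} (W : Submodule ℝ (Form2 n)) (p q : Form2 n) : Prop :=
  q ∈ W ∧ ∀ r ∈ W, ip (p - q) r = 0

/-!
With respect to the positive definite form `ip`, the subspaces `m` and `g` are each other's
orthogonal complements, so `IsOrthProj m p q` says exactly that `q ∈ m` and `p - q ∈ g`.
A linear family `D` of 2-forms is `X ↦ T(X, ·, ·)` for a 3-form `T` exactly when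
`D Y (X, Z) + D Z (X, Y) = 0`. Hence `Σ ↦ Γ - Σ` and `T ↦ Γ - T(·, ·, ·)` pass between the
two conditions, and uniqueness of orthogonal projections identifies `proj_g (T(X, ·, ·))` with
`T(X, ·, ·) - Γ X`.
-/

namespace AlternatingMap

variable {R M N : Type*} [CommRing R] [AddCommGroup M] [AddCommGroup N] [Module R M] [Module R N]

theorem map_pair_swap (f : M [⋀^Fin 2]→ₗ[R] N) (x y : M) : f ![y, x] = -f ![x, y] := by
  simpa using f.map_swap ![x, y] zero_ne_one

theorem curryLeft_apply_add_curryLeft_apply (T : M [⋀^Fin 3]→ₗ[R] N) (x y z : M) :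
    T.curryLeft y ![x, z] + T.curryLeft z ![x, y] = 0 := by
  have swap01 : ∀ a b c : M, T ![b, a, c] = -T ![a, b, c] := fun a b c => by
    simpa using T.map_swap ![a, b, c] zero_ne_one
  have swap12 : T ![x, z, y] = -T ![x, y, z] := by
    have hv : ![x, y, z] ∘ Equiv.swap 1 2 = ![x, z, y] := by ext k; fin_cases k <;> rfl
    simpa [hv] using T.map_swap ![x, y, z] (by decide : (1 : Fin 3) ≠ 2)
  simp only [curryLeft_apply_apply]
  rw [swap01 x y z, swap01 x z y, swap12]
  abel

theorem exists_curryLeft_eq (D : M →ₗ[R] M [⋀^Fin 2]→ₗ[R] N)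
    (hD : ∀ x y z : M, D y ![x, z] + D z ![x, y] = 0) :
    ∃ T : M [⋀^Fin 3]→ₗ[R] N, T.curryLeft = D := by
  have hdiag : ∀ x z : M, D x ![x, z] = 0 := fun x z => by
    simpa [(D z).map_eq_zero_of_eq ![x, x] (i := 0) (j := 1) rfl zero_ne_one] using hD x x z
  refine ⟨{ toMultilinearMap := (toMultilinearMapLM.comp D).uncurryLeft,
            map_eq_zero_of_eq' := fun v i j hv hij => ?_ }, ?_⟩
  · have htail : Fin.tail v = ![v 1, v 2] := by ext k; fin_cases k <;> rfl
    show D (v 0) (Fin.tail v) = 0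
    rw [htail]
    have hrep : v 0 = v 1 ∨ v 0 = v 2 ∨ v 1 = v 2 := by
      fin_cases i <;> fin_cases j <;> simp_all [eq_comm]
    rcases hrep with h | h | h
    · rw [← h]; exact hdiag _ _
    · rw [← h, map_pair_swap, hdiag, neg_zero]
    · exact (D _).map_eq_zero_of_eq _ (i := 0) (j := 1) (by simpa using h) zero_ne_one
  · ext x v
    simp

theorem eq_zero_of_apply_basis_lt {ι : Type*} [LinearOrder ι] (f : M [⋀^Fin 2]→ₗ[R] N)
    (e : Module.Basis ι R M) (h : ∀ i j, i < j → f ![e i, e j] = 0) : f = 0 := by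
  refine e.ext_alternating fun v hv => ?_
  have hv2 : (fun k => e (v k)) = ![e (v 0), e (v 1)] := by ext k; fin_cases k <;> rfl
  rw [hv2, zero_apply]
  rcases lt_trichotomy (v 0) (v 1) with hlt | heq | hgt
  · exact h _ _ hlt
  · exact absurd (hv heq) zero_ne_one
  · rw [map_pair_swap, h _ _ hgt, neg_zero]

end AlternatingMap

instance {K M N ι : Type*} [Field K] [AddCommGroup M] [AddCommGroup N] [Module K M] [Module K N]
    [FiniteDimensional K M] [FiniteDimensional K N] [Finite ι] :
    FiniteDimensional K (M [⋀^ι]→ₗ[K] N) :=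
  Module.Finite.of_injective (AlternatingMap.toMultilinearMapLM (S := K))
    AlternatingMap.coe_multilinearMap_injective

section InnerProduct

variable {n : ℕ}

def ipForm : LinearMap.BilinForm ℝ (Form2 n) :=
  LinearMap.mk₂ ℝ ip
    (fun A A' B => by
      simp only [ip, AlternatingMap.add_apply, add_mul, ← Finset.sum_add_distrib]
      congr! 2; split_ifs <;> simp)
    (fun c A B => by
      simp only [ip, AlternatingMap.smul_apply, smul_eq_mul, Finset.mul_sum, mul_assoc]
      congr! 2; split_ifs <;> simp)
    (fun A B B' => by
      simp only [ip, AlternatingMap.add_apply, mul_add, ← Finset.sum_add_distrib]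
      congr! 2; split_ifs <;> simp)
    (fun c A B => by
      simp only [ip, AlternatingMap.smul_apply, smul_eq_mul, Finset.mul_sum, mul_left_comm]
      congr! 2; split_ifs <;> simp)

@[simp] theorem ipForm_apply (A B : Form2 n) : ipForm A B = ip A B := rfl

theorem ip_comm (A B : Form2 n) : ip A B = ip B A := by
  simp only [ip, mul_comm]

theorem eq_zero_of_ip_self_eq_zero {A : Form2 n} (h : ip A A = 0) : A = 0 := by
  refine A.eq_zero_of_apply_basis_lt (EuclideanSpace.basisFun (Fin n) ℝ).toBasis fun i j hij => ?_
  have hterm_nonneg : ∀ a b : Fin n, 0 ≤ if a < b then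
      A ![stdBasis a, stdBasis b] * A ![stdBasis a, stdBasis b] else 0 := fun a b => by
    split_ifs
    exacts [mul_self_nonneg _, le_rfl]
  have hrow := (Finset.sum_eq_zero_iff_of_nonneg fun a _ =>
    Finset.sum_nonneg fun b _ => hterm_nonneg a b).1 h i (Finset.mem_univ i)
  have hij0 := (Finset.sum_eq_zero_iff_of_nonneg fun b _ =>
    hterm_nonneg i b).1 hrow j (Finset.mem_univ j)
  rw [if_pos hij, mul_self_eq_zero] at hij0
  simpa [stdBasis] using hij0

theorem ipForm_nondegenerate : (ipForm (n := n)).Nondegenerate :=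
  ⟨fun A h => eq_zero_of_ip_self_eq_zero (h A), fun A h => eq_zero_of_ip_self_eq_zero (h A)⟩

theorem ipForm_isRefl : (ipForm (n := n)).IsRefl := fun A B h => by
  rwa [ipForm_apply, ip_comm] at h

theorem isOrthProj_iff {W : Submodule ℝ (Form2 n)} {p q : Form2 n} :
    IsOrthProj W p q ↔ q ∈ W ∧ p - q ∈ ipForm.orthogonal W := by
  simp only [IsOrthProj, LinearMap.BilinForm.mem_orthogonal_iff, ipForm_apply, ip_comm _ (p - q)]

theorem IsOrthProj.unique {W : Submodule ℝ (Form2 n)} {p q q' : Form2 n}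
    (h : IsOrthProj W p q) (h' : IsOrthProj W p q') : q = q' := by
  have hmem : q - q' ∈ W := W.sub_mem h.1 h'.1
  have hd : ip (q - q') (q - q') = 0 :=
    calc ip (q - q') (q - q') = ipForm ((p - q') - (p - q)) (q - q') := by
          rw [ipForm_apply, sub_sub_sub_cancel_left]
      _ = 0 := by rw [LinearMap.map_sub₂, ipForm_apply, ipForm_apply,
          h'.2 _ hmem, h.2 _ hmem, sub_zero]
  exact sub_eq_zero.1 (eq_zero_of_ip_self_eq_zero hd)

end InnerProduct

/-- pointwise content of Theorem 5.1 of the paper.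
For a subspace `g` of alternating 2-forms on `ℝⁿ` with orthogonal complement `m`,
and a linear map `Γ : ℝⁿ → m`, the existence of a linear `Σ : ℝⁿ → g` with
`Γ(Y)(X,Z) + Γ(Z)(X,Y) = Σ(Y)(X,Z) + Σ(Z)(X,Y)` is equivalent to the existence of a
3-form `T` with `Γ(X) = proj_m(T(X,·,·))`; moreover `Σ(X) = −proj_g(T(X,·,·))` then works. -/
theorem stmt_0 {n : ℕ} (g m : Submodule ℝ (Form2 n))
    (hm : ∀ A : Form2 n, A ∈ m ↔ ∀ B ∈ g, ip A B = 0)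
    (Γ : E n →ₗ[ℝ] Form2 n) (hΓ : ∀ X, Γ X ∈ m) :
    ((∃ S : E n →ₗ[ℝ] Form2 n, (∀ X, S X ∈ g) ∧
        ∀ X Y Z : E n, Γ Y ![X, Z] + Γ Z ![X, Y] = S Y ![X, Z] + S Z ![X, Y])
      ↔ ∃ T : Form3 n, ∀ X, IsOrthProj m (T.curryLeft X) (Γ X)) ∧
    (∀ T : Form3 n, (∀ X, IsOrthProj m (T.curryLeft X) (Γ X)) →
      ∀ P : E n → Form2 n, (∀ X, IsOrthProj g (T.curryLeft X) (P X)) →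
        ∀ X Y Z : E n,
          Γ Y ![X, Z] + Γ Z ![X, Y] = (-(P Y)) ![X, Z] + (-(P Z)) ![X, Y]) := by
  have hm_orth : m = ipForm.orthogonal g := by
    ext A
    simp only [hm, LinearMap.BilinForm.mem_orthogonal_iff, ipForm_apply, ip_comm A]
  have hg_orth : g = ipForm.orthogonal m := by
    rw [hm_orth, LinearMap.BilinForm.orthogonal_orthogonal ipForm_nondegenerate ipForm_isRefl]
  have hproj : ∀ T : Form3 n,
      (∀ X, IsOrthProj m (T.curryLeft X) (Γ X)) ↔ ∀ X, T.curryLeft X - Γ X ∈ g := fun T => by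
    simp only [isOrthProj_iff, hΓ, true_and, ← hg_orth]
  refine ⟨⟨fun ⟨S, hSg, hS⟩ => ?_, fun ⟨T, hT⟩ => ?_⟩, fun T hT P hP X Y Z => ?_⟩
  · obtain ⟨T, hT⟩ := AlternatingMap.exists_curryLeft_eq (Γ - S) fun X Y Z => by
      simp only [LinearMap.sub_apply, AlternatingMap.sub_apply]
      linarith [hS X Y Z]
    refine ⟨T, (hproj T).2 fun X => ?_⟩
    simpa [hT] using g.neg_mem (hSg X)
  · refine ⟨Γ - T.curryLeft, fun X => by simpa using g.neg_mem ((hproj T).1 hT X), fun X Y Z => ?_⟩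
    simp only [LinearMap.sub_apply, AlternatingMap.sub_apply]
    linarith [T.curryLeft_apply_add_curryLeft_apply X Y Z]
  · have hP_eq : ∀ W, P W = T.curryLeft W - Γ W := fun W =>
      (hP W).unique (isOrthProj_iff.2 ⟨(hproj T).1 hT W, by simpa [← hm_orth] using hΓ W⟩)
    simp only [hP_eq, neg_sub, AlternatingMap.sub_apply]
    linarith [T.curryLeft_apply_add_curryLeft_apply X Y Z]
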